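/- (Cycle of contradiction) Let σ be a substitution over Σ and let a_0, …, a_{p−1} (p > 1) be distinct letters such that the first letter of σ^p(a_0) is a_0 and, for each r ∈ {1, …, p−1}, the first letter of σ^r(a_0) is a_r. Then σ^ω(a_0) = σ^ω(a_1) = ⋯ = σ^ω(a_{p−1}) = ⊥, i.e., none of the sequences (σ^n(a_r))_{n∈ℕ} converges in Σ^+ ∪ Σ^ω. -/

import Mathlib

universe u

variable {A : Type u}

/-- Finite or infinite words over `A`, plus `⊥` (`Word.bot`) representing divergence. -/
inductive Word (A : Type u) : Type u
  | fin : List A → Word A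
  | inf : (ℕ → A) → Word A
  | bot : Word A

namespace Word

/-- `α` lies in `Σ⁺ ∪ Σ^ω`: it is a nonempty finite word or an infinite word. -/
def IsProper : Word A → Prop
  | fin l => l ≠ []
  | inf _ => True
  | bot => False

/-- `α` is an infinite word. -/
def IsInf : Word A → Prop
  | inf _ => True
  | _ => False

/-- Concatenation, with the conventions `α·x = α` for infinite `α`, `⊥·x = ⊥`,
and `u·⊥ = ⊥` for finite `u`. -/
def cat : Word A → Word A → Word A
  | fin u, fin v => fin (u ++ v)
  | fin u, inf f => inf (fun n => if h : n < u.length then u.get ⟨n, h⟩ else f (n - u.length))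
  | fin _, bot => bot
  | inf f, _ => inf f
  | bot, _ => bot

/-- The finite word `u` is a prefix of the word `α`. -/
def hasPrefix : Word A → List A → Prop
  | fin v, u => u <+: v
  | inf f, u => u = List.ofFn (fun i : Fin u.length => f i.1)
  | bot, _ => False

/-- The periodic infinite word `u^ω` for a nonempty finite word `u`. -/
def perW (u : List A) (hu : u ≠ []) : Word A :=
  inf (fun n => u.get ⟨n % u.length, Nat.mod_lt n (List.length_pos_iff.mpr hu)⟩)

end Word

/-- Concatenation of a finite list of finite words. -/
def flat : List (List A) → List A
  | [] => []
  | x :: t => x ++ flat t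

/-- A substitution: a non-erasing morphism `Σ* → Σ*`, given by its images on letters. -/
def Subst (A : Type u) : Type u := {f : A → List A // ∀ a, f a ≠ []}

namespace Subst

/-- Application of a substitution to a finite word. -/
def apply (σ : Subst A) : List A → List A
  | [] => []
  | a :: t => σ.1 a ++ apply σ t

theorem apply_ne_nil (σ : Subst A) : ∀ {w : List A}, w ≠ [] → σ.apply w ≠ []
  | [], hw => absurd rfl hw
  | a :: t, _ => by
    cases hσ : σ.1 a with
    | nil => exact absurd hσ (σ.2 a)
    | cons b r => simp [apply, hσ]

/-- Composition of substitutions (`comp σ μ = σ ∘ μ`). -/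
def comp (σ μ : Subst A) : Subst A :=
  ⟨fun a => σ.apply (μ.1 a), fun a => σ.apply_ne_nil (μ.2 a)⟩

/-- The identity substitution. -/
def idS (A : Type u) : Subst A :=
  ⟨fun a => [a], fun _ => by simp⟩

/-- Iterated application `σ^n`. -/
def iter (σ : Subst A) : ℕ → List A → List A
  | 0, w => w
  | n + 1, w => σ.apply (iter σ n w)

/-- Application of a substitution to an infinite word. -/
def applyInf (σ : Subst A) (f : ℕ → A) : ℕ → A :=
  fun n => (σ.apply ((List.range (n + 1)).map f)).getD n (f 0)

/-- Application of a substitution to a (finite, infinite or bottom) word. -/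
def applyWord (σ : Subst A) : Word A → Word A
  | Word.fin l => Word.fin (σ.apply l)
  | Word.inf f => Word.inf (σ.applyInf f)
  | Word.bot => Word.bot

/-- `σ` is positive: every letter `b` appears in `σ(c)` for every letter `c`. -/
def Positive (σ : Subst A) : Prop := ∀ b c : A, b ∈ σ.1 c

/-- `σ` is left-proper: all images of letters begin with the same letter. -/
def LeftProper (σ : Subst A) : Prop := ∃ b : A, ∀ a : A, (σ.1 a).head? = some b

end Subst

/-- `applyComp s n w = σ₀⋯σ_{n-1}(w)`. -/
def applyComp (s : ℕ → Subst A) (n : ℕ) (w : List A) : List A :=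
  (List.range n).foldr (fun i acc => (s i).apply acc) w

/-- `applySeg s n m w = σ_n⋯σ_m(w)` (for `n ≤ m`). -/
def applySeg (s : ℕ → Subst A) (n m : ℕ) (w : List A) : List A :=
  (List.range (m + 1 - n)).foldr (fun i acc => (s (n + i)).apply acc) w

/-- A directive sequence is weakly primitive if for every `n` there is `m ≥ n`
such that `σ_n ∘ ⋯ ∘ σ_m` is positive. -/
def WeaklyPrimitive (s : ℕ → Subst A) : Prop :=
  ∀ n, ∃ m, n ≤ m ∧ ∀ b c : A, b ∈ applySeg s n m [c]

open Classical in
/-- The limit of a sequence of finite words: the eventual value if the sequence is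
eventually constant; the infinite word β if for every `j` the first `j` letters are
eventually those of β; `Word.bot` otherwise. -/
noncomputable def limWord (u : ℕ → List A) : Word A :=
  if h : ∃ v : List A, ∃ N : ℕ, ∀ n, N ≤ n → u n = v then Word.fin h.choose
  else if h2 : ∃ β : ℕ → A, ∀ j : ℕ, ∃ N : ℕ, ∀ n, N ≤ n → (u n).take j = (List.range j).map β
    then Word.inf h2.choose
  else Word.bot

/-- `σ^ω(u) = lim_n σ^n(u)`, with `σ^ω(ε) = ε`. -/
noncomputable def Subst.omegaPow (σ : Subst A) : List A → Word A
  | [] => Word.fin []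
  | w@(_ :: _) => limWord (fun n => σ.iter n w)

/-- The directive sequence `s` directs the word `α`. -/
def Directs (s : ℕ → Subst A) (α : Word A) : Prop :=
  ∃ β : ℕ → Word A, β 0 = α ∧ (∀ n, (β n).IsProper) ∧ ∀ n, β n = (s n).applyWord (β (n + 1))

/-- `(σ_n, a_n)` is congenial: `σ_{n+1}(a_{n+1})` begins with `a_n`. -/
def Congenial (s : ℕ → Subst A) (a : ℕ → A) : Prop :=
  ∀ n, ((s (n + 1)).1 (a (n + 1))).head? = some (a n)

/-- The word generated by `(σ_n, a_n)`: `lim_n σ₀⋯σ_n(a_n)`. -/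
noncomputable def genWord (s : ℕ → Subst A) (a : ℕ → A) : Word A :=
  limWord (fun n => applyComp s (n + 1) [a n])

/-- `α` is an `s`-congenial word. -/
def SCongenial (s : ℕ → Subst A) (α : Word A) : Prop :=
  α.IsProper ∧ ∃ a : ℕ → A, Congenial s a ∧ genWord s a = α

/-- Auxiliary function for `segs`. -/
def segsAux [DecidableEq A] : List A → List A → A → List A → List (A × List A)
  | [], _, b, cur => [(b, cur.reverse)]
  | x :: t, seen, b, cur =>
    if x ∈ seen then segsAux t seen b (x :: cur)
    else (b, cur.reverse) :: segsAux t (x :: seen) x []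

/-- The factorisation `w = b₁v₁⋯b_dv_d` of a word based on first occurrences of letters,
returned as the list `[(b₁, v₁), …, (b_d, v_d)]`. -/
def segs [DecidableEq A] : List A → List (A × List A)
  | [] => []
  | x :: t => segsAux t [x] x []

/-- Substitutions `σ, τ` are equivalent modulo the monoid `M`:
`segments_σ(a, h) = segments_τ(a, h)` for every letter `a` and homomorphism `h : Σ* → M`. -/
def SegEquiv [DecidableEq A] (M : Type*) [Monoid M] (σ τ : Subst A) : Prop :=
  ∀ (a : A) (h : FreeMonoid A →* M),
    (segs (σ.1 a)).map (fun p => (p.1, h (FreeMonoid.ofList p.2))) =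
    (segs (τ.1 a)).map (fun p => (p.1, h (FreeMonoid.ofList p.2)))

/-- The setoid of substitutions modulo `M`; its quotient is `Ξ_M`. -/
def segSetoid (A : Type u) [DecidableEq A] (M : Type*) [Monoid M] : Setoid (Subst A) where
  r := SegEquiv M
  iseqv := ⟨fun _ _ _ => rfl, fun h a hm => (h a hm).symm,
    fun h1 h2 a hm => (h1 a hm).trans (h2 a hm)⟩

theorem Subst.apply_append' (σ : Subst A) (u v : List A) :
    σ.apply (u ++ v) = σ.apply u ++ σ.apply v := by
  induction u with
  | nil => rfl
  | cons x t ih => simp [Subst.apply, ih]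

theorem Subst.iter_append' (σ : Subst A) (n : ℕ) (u v : List A) :
    σ.iter n (u ++ v) = σ.iter n u ++ σ.iter n v := by
  induction n with
  | zero => rfl
  | succ n ih => simp [Subst.iter, ih, Subst.apply_append']

theorem Subst.iter_add' (σ : Subst A) (m n : ℕ) (w : List A) :
    σ.iter (m + n) w = σ.iter m (σ.iter n w) := by
  induction m with
  | zero => simp [Subst.iter]
  | succ m ih =>
    have : m + 1 + n = (m + n) + 1 := by omega
    rw [this]
    show σ.apply (σ.iter (m + n) w) = σ.apply (σ.iter m (σ.iter n w))
    rw [ih]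

theorem Subst.iter_ne_nil' (σ : Subst A) (n : ℕ) {w : List A} (hw : w ≠ []) :
    σ.iter n w ≠ [] := by
  induction n with
  | zero => exact hw
  | succ n ih => exact σ.apply_ne_nil ih

theorem head?_take_one {l : List A} {x : A} (h : l.take 1 = [x]) :
    l.head? = some x := by
  cases l with
  | nil => simp at h
  | cons y t => simp_all

/-- **Cycle of contradiction.** If `a₀, …, a_{p-1}` (`p > 1`) are distinct
letters such that `σ^p(a₀)` begins with `a₀` and `σ^r(a₀)` begins with `a_r` for
`1 ≤ r ≤ p-1`, then `σ^ω(a_r) = ⊥` for every `r`. -/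
theorem omegaPow_cycle_of_contradiction {A : Type u} [Fintype A] [Nonempty A]
    (σ : Subst A) (p : ℕ) (hp : 1 < p) (a : Fin p → A) (hinj : Function.Injective a)
    (h0 : (σ.iter p [a ⟨0, by omega⟩]).head? = some (a ⟨0, by omega⟩))
    (hr : ∀ r : Fin p, 0 < (r : ℕ) → (σ.iter r [a ⟨0, by omega⟩]).head? = some (a r)) :
    ∀ r : Fin p, σ.omegaPow [a r] = Word.bot := by
  have hp0 : 0 < p := by omega
  set a0 : A := a ⟨0, hp0⟩ with ha0
  -- the head of σ^n(a₀) is a_{n % p}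
  have key0 : ∀ n : ℕ, (σ.iter n [a0]).head? = some (a ⟨n % p, Nat.mod_lt _ hp0⟩) := by
    intro n
    induction n using Nat.strong_induction_on with
    | _ n ih =>
      by_cases hlt : n < p
      · rcases Nat.eq_zero_or_pos n with h | h
        · subst h
          simp [Subst.iter, ha0, Nat.mod_eq_of_lt hp0]
        · have := hr ⟨n, hlt⟩ h
          simpa [Nat.mod_eq_of_lt hlt] using this
      · push_neg at hlt
        obtain ⟨t, ht⟩ : ∃ t, σ.iter p [a0] = a0 :: t := by
          cases h : σ.iter p [a0] with
          | nil => rw [h] at h0; simp at h0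
          | cons x s =>
            rw [h] at h0
            simp at h0
            exact ⟨s, by rw [h0]⟩
        have hdecomp : σ.iter n [a0] = σ.iter (n - p) [a0] ++ σ.iter (n - p) t := by
          have hn : n = (n - p) + p := by omega
          conv_lhs => rw [hn]
          rw [Subst.iter_add', ht]
          show σ.iter (n - p) ([a0] ++ t) = _
          rw [Subst.iter_append']
        rw [hdecomp, List.head?_append_of_ne_nil _ (σ.iter_ne_nil' _ (by simp))]
        have hih := ih (n - p) (by omega)
        rw [hih]
        congr 1
        apply congrArg
        exact Fin.ext (by simpa using (Nat.mod_eq_sub_mod hlt).symm)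
  -- the head of σ^n(a_r) is a_{(n + r) % p}
  have key : ∀ (r : Fin p) (n : ℕ),
      (σ.iter n [a r]).head? = some (a ⟨(n + (r : ℕ)) % p, Nat.mod_lt _ hp0⟩) := by
    intro r n
    rcases Nat.eq_zero_or_pos (r : ℕ) with h | h
    · have : r = ⟨0, hp0⟩ := Fin.ext h
      rw [this]
      simpa [h] using key0 n
    · obtain ⟨t, ht⟩ : ∃ t, σ.iter (r : ℕ) [a0] = a r :: t := by
        have := hr r h
        cases hc : σ.iter (r : ℕ) [a0] with
        | nil => rw [hc] at this; simp at this
        | cons x s =>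
          rw [hc] at this
          simp at this
          exact ⟨s, by rw [this]⟩
      have h1 : σ.iter (n + (r : ℕ)) [a0] = σ.iter n [a r] ++ σ.iter n t := by
        rw [Subst.iter_add', ht]
        show σ.iter n ([a r] ++ t) = _
        rw [Subst.iter_append']
      have h2 := key0 (n + (r : ℕ))
      rw [h1, List.head?_append_of_ne_nil _ (σ.iter_ne_nil' _ (by simp))] at h2
      exact h2
  -- consecutive residues differ
  have hmod : ∀ m : ℕ, m % p ≠ (m + 1) % p := by
    intro m h
    have h1 : (m + 1) % p = (m % p + 1) % p := by
      conv_lhs => rw [Nat.add_mod]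
      rw [Nat.mod_eq_of_lt hp]
    have h2 : m % p < p := Nat.mod_lt _ hp0
    by_cases hc : m % p + 1 < p
    · rw [Nat.mod_eq_of_lt hc] at h1; omega
    · have hc' : m % p + 1 = p := by omega
      rw [hc', Nat.mod_self] at h1; omega
  intro r
  have hne : ∀ n : ℕ, (σ.iter n [a r]).head? ≠ (σ.iter (n + 1) [a r]).head? := by
    intro n h
    rw [key r n, key r (n + 1)] at h
    have h' := hinj (Option.some_injective _ h)
    have hv : (n + (r : ℕ)) % p = (n + 1 + (r : ℕ)) % p := congrArg Fin.val h'
    have he : n + 1 + (r : ℕ) = (n + (r : ℕ)) + 1 := by omega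
    rw [he] at hv
    exact hmod _ hv
  show limWord (fun n => σ.iter n [a r]) = Word.bot
  rw [limWord]
  rw [dif_neg, dif_neg]
  · rintro ⟨β, hβ⟩
    obtain ⟨N, hN⟩ := hβ 1
    have e1 : (σ.iter N [a r]).head? = some (β 0) :=
      head?_take_one (by simpa using hN N le_rfl)
    have e2 : (σ.iter (N + 1) [a r]).head? = some (β 0) :=
      head?_take_one (by simpa using hN (N + 1) (by omega))
    exact hne N (e1.trans e2.symm)
  · rintro ⟨v, N, hN⟩
    exact hne N (by rw [hN N le_rfl, hN (N + 1) (by omega)])
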